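/- arXiv:math/0703256 — 8 statements merged into one kernel-verified Lean document; each statement's English description precedes it below -/
import Mathlib

section
/- Let I ⊆ ℝ be an open interval, E ∈ ℂ, and let v : I → ℂ be differentiable. If f₁, f₂ : I → ℂ are twice differentiable and satisfy −fᵢ''(x) + (v(x) − E) fᵢ(x) = 0 on I for i = 1, 2, then the product Ξ(x) = f₁(x) f₂(x) is three times differentiable on I and satisfies Ξ'''(x) − 4 (v(x) − E) Ξ'(x) − 2 v'(x) Ξ(x) = 0 for all x ∈ I. -/
/-!
Write `Ξ = f₁ f₂`. Substituting `fᵢ'' = (v - E) fᵢ` into `Ξ'' = f₁'' f₂ + 2 f₁' f₂' + f₁ f₂''` gives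
`Ξ'' = 2 (v - E) Ξ + 2 f₁' f₂'`, and differentiating once more and substituting again gives
`Ξ''' = 2 v' Ξ + 2 (v - E) Ξ' + 2 (v - E) (f₁ f₂' + f₁' f₂) = 2 v' Ξ + 4 (v - E) Ξ'`.
Since `deriv` is a pointwise operation, the iterated derivatives of `Ξ` are identified with these
explicit formulas on the whole open interval; this also shows that they are differentiable.
-/

open Set

theorem hasDerivAt_deriv_of_eqOn {𝕜 F : Type*} [NontriviallyNormedField 𝕜]
    [NormedAddCommGroup F] [NormedSpace 𝕜 F] {f g : 𝕜 → F} {g' : F} {U : Set 𝕜} {x : 𝕜}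
    (hU : IsOpen U) (hfg : EqOn (deriv f) g U) (hx : x ∈ U) (hg : HasDerivAt g g' x) :
    HasDerivAt (deriv f) g' x :=
  hg.congr_of_eventuallyEq (Filter.eventuallyEq_of_mem (hU.mem_nhds hx) hfg)

section Schrodinger

variable {𝕜 𝔸 : Type*} [NontriviallyNormedField 𝕜] [NormedCommRing 𝔸] [NormedAlgebra 𝕜 𝔸]
  {E : 𝔸} {v f₁ f₂ : 𝕜 → 𝔸} {x : 𝕜}

theorem hasDerivAt_deriv_mul_of_schrodinger
    (hf₁ : DifferentiableAt 𝕜 f₁ x) (hf₁' : DifferentiableAt 𝕜 (deriv f₁) x)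
    (hf₂ : DifferentiableAt 𝕜 f₂ x) (hf₂' : DifferentiableAt 𝕜 (deriv f₂) x)
    (hsol₁ : deriv (deriv f₁) x = (v x - E) * f₁ x)
    (hsol₂ : deriv (deriv f₂) x = (v x - E) * f₂ x) :
    HasDerivAt (fun y => deriv f₁ y * f₂ y + f₁ y * deriv f₂ y)
      (2 * (v x - E) * (f₁ x * f₂ x) + 2 * (deriv f₁ x * deriv f₂ x)) x := by
  refine ((hf₁'.hasDerivAt.fun_mul hf₂.hasDerivAt).add
    (hf₁.hasDerivAt.fun_mul hf₂'.hasDerivAt)).congr_deriv ?_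
  rw [hsol₁, hsol₂]
  ring

theorem hasDerivAt_deriv_deriv_mul_of_schrodinger (hv : DifferentiableAt 𝕜 v x)
    (hf₁ : DifferentiableAt 𝕜 f₁ x) (hf₁' : DifferentiableAt 𝕜 (deriv f₁) x)
    (hf₂ : DifferentiableAt 𝕜 f₂ x) (hf₂' : DifferentiableAt 𝕜 (deriv f₂) x)
    (hsol₁ : deriv (deriv f₁) x = (v x - E) * f₁ x)
    (hsol₂ : deriv (deriv f₂) x = (v x - E) * f₂ x) :
    HasDerivAt (fun y => 2 * (v y - E) * (f₁ y * f₂ y) + 2 * (deriv f₁ y * deriv f₂ y))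
      (4 * (v x - E) * (deriv f₁ x * f₂ x + f₁ x * deriv f₂ x)
        + 2 * deriv v x * (f₁ x * f₂ x)) x := by
  refine ((((hv.hasDerivAt.sub_const E).const_mul 2).fun_mul
    (hf₁.hasDerivAt.fun_mul hf₂.hasDerivAt)).add
    ((hf₁'.hasDerivAt.fun_mul hf₂'.hasDerivAt).const_mul 2)).congr_deriv ?_
  rw [hsol₁, hsol₂]
  ring

end Schrodinger

theorem product_of_solutions_satisfies_third_order_equation
    (a b : ℝ) (E : ℂ) (v f₁ f₂ : ℝ → ℂ)
    (hv : ∀ x ∈ Ioo a b, DifferentiableAt ℝ v x)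
    (hf₁ : ∀ x ∈ Ioo a b, DifferentiableAt ℝ f₁ x)
    (hf₁' : ∀ x ∈ Ioo a b, DifferentiableAt ℝ (deriv f₁) x)
    (hf₂ : ∀ x ∈ Ioo a b, DifferentiableAt ℝ f₂ x)
    (hf₂' : ∀ x ∈ Ioo a b, DifferentiableAt ℝ (deriv f₂) x)
    (heq₁ : ∀ x ∈ Ioo a b, -(deriv (deriv f₁) x) + (v x - E) * f₁ x = 0)
    (heq₂ : ∀ x ∈ Ioo a b, -(deriv (deriv f₂) x) + (v x - E) * f₂ x = 0) :
    (∀ x ∈ Ioo a b, DifferentiableAt ℝ (fun y => f₁ y * f₂ y) x) ∧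
    (∀ x ∈ Ioo a b, DifferentiableAt ℝ (deriv (fun y => f₁ y * f₂ y)) x) ∧
    (∀ x ∈ Ioo a b, DifferentiableAt ℝ (deriv (deriv (fun y => f₁ y * f₂ y))) x) ∧
    (∀ x ∈ Ioo a b,
      deriv (deriv (deriv (fun y => f₁ y * f₂ y))) x
        - 4 * (v x - E) * deriv (fun y => f₁ y * f₂ y) x
        - 2 * deriv v x * (f₁ x * f₂ x) = 0) := by
  have hsol₁ : ∀ x ∈ Ioo a b, deriv (deriv f₁) x = (v x - E) * f₁ x := fun x hx => by
    linear_combination -heq₁ x hx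
  have hsol₂ : ∀ x ∈ Ioo a b, deriv (deriv f₂) x = (v x - E) * f₂ x := fun x hx => by
    linear_combination -heq₂ x hx
  have hΞ' : ∀ x ∈ Ioo a b, HasDerivAt (fun y => f₁ y * f₂ y)
      (deriv f₁ x * f₂ x + f₁ x * deriv f₂ x) x := fun x hx =>
    (hf₁ x hx).hasDerivAt.fun_mul (hf₂ x hx).hasDerivAt
  have hΞ'' : ∀ x ∈ Ioo a b, HasDerivAt (deriv fun y => f₁ y * f₂ y)
      (2 * (v x - E) * (f₁ x * f₂ x) + 2 * (deriv f₁ x * deriv f₂ x)) x := fun x hx =>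
    hasDerivAt_deriv_of_eqOn isOpen_Ioo (fun y hy => (hΞ' y hy).deriv) hx
      (hasDerivAt_deriv_mul_of_schrodinger (hf₁ x hx) (hf₁' x hx) (hf₂ x hx) (hf₂' x hx)
        (hsol₁ x hx) (hsol₂ x hx))
  have hΞ''' : ∀ x ∈ Ioo a b, HasDerivAt (deriv (deriv fun y => f₁ y * f₂ y))
      (4 * (v x - E) * (deriv f₁ x * f₂ x + f₁ x * deriv f₂ x)
        + 2 * deriv v x * (f₁ x * f₂ x)) x := fun x hx =>
    hasDerivAt_deriv_of_eqOn isOpen_Ioo (fun y hy => (hΞ'' y hy).deriv) hx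
      (hasDerivAt_deriv_deriv_mul_of_schrodinger (hv x hx) (hf₁ x hx) (hf₁' x hx) (hf₂ x hx)
        (hf₂' x hx) (hsol₁ x hx) (hsol₂ x hx))
  refine ⟨fun x hx => (hΞ' x hx).differentiableAt, fun x hx => (hΞ'' x hx).differentiableAt,
    fun x hx => (hΞ''' x hx).differentiableAt, fun x hx => ?_⟩
  rw [(hΞ''' x hx).deriv, (hΞ' x hx).deriv]
  ring
end

section
/- Let I ⊆ ℝ be an open interval, E ∈ ℂ, let v : I → ℂ be differentiable, and let Ξ : I → ℂ be three times differentiable and nowhere vanishing on I, satisfying Ξ''' − 4(v − E)Ξ' − 2v'Ξ = 0 on I. Let Q ∈ ℂ be the constant with Ξ(x)²(E − v(x)) + (1/2)Ξ(x)Ξ''(x) − (1/4)(Ξ'(x))² = Q for all x ∈ I, and let s ∈ ℂ satisfy s² = −Q. If Λ : I → ℂ is differentiable and satisfies Λ'(x) = (Ξ'(x)/(2Ξ(x)) + s/Ξ(x)) Λ(x) on I, then Λ is twice differentiable and satisfies −Λ''(x) + (v(x) − E) Λ(x) = 0 on I. -/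
/-!
Write `Λ' = w Λ` with `w = Ξ'/(2Ξ) + s/Ξ`. Then `Λ'' = (w' + w²) Λ`, so it suffices that `w` solves
the Riccati equation `w' + w² = v - E`. A direct computation gives
`Ξ² (w' + w²) = ΞΞ''/2 - Ξ'²/4 + s²`, which equals `Ξ² (v - E)` by the definition of `Q` and
`s² = -Q`.
-/

open Set Filter Topology

section Riccati

variable {𝕜 𝕜' : Type*} [NontriviallyNormedField 𝕜] [NontriviallyNormedField 𝕜']
  [NormedAlgebra 𝕜 𝕜']

theorem hasDerivAt_deriv_of_eventually_hasDerivAt_mul {f w : 𝕜 → 𝕜'} {V : 𝕜'} {x : 𝕜}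
    (hf : ∀ᶠ y in 𝓝 x, HasDerivAt f (w y * f y) y) (hw : HasDerivAt w (V - w x ^ 2) x) :
    HasDerivAt (deriv f) (V * f x) x := by
  have hderiv : deriv f =ᶠ[𝓝 x] fun y => w y * f y := hf.mono fun y hy => hy.deriv
  have hprod := hw.mul hf.self_of_nhds
  rw [show (V - w x ^ 2) * f x + w x * (w x * f x) = V * f x by ring] at hprod
  exact hprod.congr_of_eventuallyEq hderiv

theorem hasDerivAt_half_logDeriv_add_div [CharZero 𝕜'] {ξ dξ : 𝕜 → 𝕜'} {ddξ V s : 𝕜'} {x : 𝕜}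
    (hξ : HasDerivAt ξ (dξ x) x) (hdξ : HasDerivAt dξ ddξ x) (hξx : ξ x ≠ 0)
    (hV : ξ x ^ 2 * V = 1 / 2 * ξ x * ddξ - 1 / 4 * dξ x ^ 2 + s ^ 2) :
    HasDerivAt (fun y => dξ y / (2 * ξ y) + s / ξ y)
      (V - (dξ x / (2 * ξ x) + s / ξ x) ^ 2) x := by
  have h2ξx : 2 * ξ x ≠ 0 := mul_ne_zero two_ne_zero hξx
  refine ((hdξ.div (hξ.const_mul 2) h2ξx).add ((hasDerivAt_const x s).div hξ hξx)).congr_deriv ?_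
  field_simp
  linear_combination (-4 : 𝕜') * hV

end Riccati

theorem integral_representation_gives_eigenfunction_general
    (a b : ℝ) (E Q s : ℂ) (v Ξ Λ : ℝ → ℂ)
    (hΞ : ∀ x ∈ Ioo a b, DifferentiableAt ℝ Ξ x)
    (hΞ' : ∀ x ∈ Ioo a b, DifferentiableAt ℝ (deriv Ξ) x)
    (hΞne : ∀ x ∈ Ioo a b, Ξ x ≠ 0)
    (hQ : ∀ x ∈ Ioo a b,
      (Ξ x) ^ 2 * (E - v x) + (1 / 2) * Ξ x * deriv (deriv Ξ) x - (1 / 4) * (deriv Ξ x) ^ 2 = Q)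
    (hs : s ^ 2 = -Q)
    (hΛ : ∀ x ∈ Ioo a b, DifferentiableAt ℝ Λ x)
    (hΛ' : ∀ x ∈ Ioo a b, deriv Λ x = (deriv Ξ x / (2 * Ξ x) + s / Ξ x) * Λ x) :
    (∀ x ∈ Ioo a b, DifferentiableAt ℝ (deriv Λ) x) ∧
    (∀ x ∈ Ioo a b, -(deriv (deriv Λ) x) + (v x - E) * Λ x = 0) := by
  have hΛ'' : ∀ x ∈ Ioo a b, HasDerivAt (deriv Λ) ((v x - E) * Λ x) x := by
    intro x hx
    have hΛ_near : ∀ᶠ y in 𝓝 x, HasDerivAt Λ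
        ((deriv Ξ y / (2 * Ξ y) + s / Ξ y) * Λ y) y := by
      filter_upwards [isOpen_Ioo.mem_nhds hx] with y hy
      exact hΛ' y hy ▸ (hΛ y hy).hasDerivAt
    refine hasDerivAt_deriv_of_eventually_hasDerivAt_mul hΛ_near ?_
    exact hasDerivAt_half_logDeriv_add_div (hΞ x hx).hasDerivAt (hΞ' x hx).hasDerivAt (hΞne x hx)
      (by linear_combination -hQ x hx - hs)
  refine ⟨fun x hx => (hΛ'' x hx).differentiableAt, fun x hx => ?_⟩
  rw [(hΛ'' x hx).deriv]
  ring

theorem integral_representation_gives_eigenfunction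
    (a b : ℝ) (E Q s : ℂ) (v Ξ Λ : ℝ → ℂ)
    (hv : ∀ x ∈ Ioo a b, DifferentiableAt ℝ v x)
    (hΞ : ∀ x ∈ Ioo a b, DifferentiableAt ℝ Ξ x)
    (hΞ' : ∀ x ∈ Ioo a b, DifferentiableAt ℝ (deriv Ξ) x)
    (hΞ'' : ∀ x ∈ Ioo a b, DifferentiableAt ℝ (deriv (deriv Ξ)) x)
    (hΞne : ∀ x ∈ Ioo a b, Ξ x ≠ 0)
    (heq : ∀ x ∈ Ioo a b,
      deriv (deriv (deriv Ξ)) x - 4 * (v x - E) * deriv Ξ x - 2 * deriv v x * Ξ x = 0)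
    (hQ : ∀ x ∈ Ioo a b,
      (Ξ x) ^ 2 * (E - v x) + (1 / 2) * Ξ x * deriv (deriv Ξ) x - (1 / 4) * (deriv Ξ x) ^ 2 = Q)
    (hs : s ^ 2 = -Q)
    (hΛ : ∀ x ∈ Ioo a b, DifferentiableAt ℝ Λ x)
    (hΛ' : ∀ x ∈ Ioo a b, deriv Λ x = (deriv Ξ x / (2 * Ξ x) + s / Ξ x) * Λ x) :
    (∀ x ∈ Ioo a b, DifferentiableAt ℝ (deriv Λ) x) ∧
    (∀ x ∈ Ioo a b, -(deriv (deriv Λ) x) + (v x - E) * Λ x = 0) :=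
  integral_representation_gives_eigenfunction_general a b E Q s v Ξ Λ hΞ hΞ' hΞne hQ hs hΛ hΛ'
end

section
/- Let g ∈ ℕ, let I ⊆ ℝ be an open interval, let v : I → ℂ be infinitely differentiable, and let a₀, a₁, …, a_g : I → ℂ be infinitely differentiable functions such that a₀ is constant, a_j''' − 4 v a_j' − 2 v' a_j + 4 a_{j+1}' = 0 on I for 0 ≤ j ≤ g−1, and a_g''' − 4 v a_g' − 2 v' a_g = 0 on I. Define H f = −f'' + v f and A f = Σ_{j=0}^{g} ( a_j · (H^{g−j} f)' − (1/2) a_j' · (H^{g−j} f) ) for infinitely differentiable f : I → ℂ, where H^{k} denotes the k-fold iterate of H. Then A (H f) = H (A f) for every infinitely differentiable f : I → ℂ. -/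
open Set Filter

/-- The Schrödinger operator `H f = -f'' + v f`. -/
noncomputable def Hop (v : ℝ → ℂ) (f : ℝ → ℂ) : ℝ → ℂ :=
  fun x => -(deriv (deriv f) x) + v x * f x

/-- The odd-order operator
`A f = Σ_{j=0}^{g} ( a_j (H^{g-j} f)' - (1/2) a_j' (H^{g-j} f) )`. -/
noncomputable def Aop (g : ℕ) (v : ℝ → ℂ) (a : ℕ → ℝ → ℂ) (f : ℝ → ℂ) : ℝ → ℂ :=
  fun x => ∑ j ∈ Finset.range (g + 1),
    (a j x * deriv ((Hop v)^[g - j] f) x - (1 / 2) * deriv (a j) x * ((Hop v)^[g - j] f) x)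

/-- The single term `A_b h = b h' - (1/2) b' h`. -/
noncomputable def AbOp (b h : ℝ → ℂ) : ℝ → ℂ :=
  fun x => b x * deriv h x - (1 / 2) * deriv b x * h x

section Helpers

variable {S : Set ℝ} {v b h : ℝ → ℂ}

lemma smoothDeriv (hS : IsOpen S) {F : ℝ → ℂ} (hF : ContDiffOn ℝ (⊤ : ℕ∞) F S) :
    ContDiffOn ℝ (⊤ : ℕ∞) (deriv F) S := hF.deriv_of_isOpen hS (by simp)

lemma hasD (hS : IsOpen S) {F : ℝ → ℂ} (hF : ContDiffOn ℝ (⊤ : ℕ∞) F S) {x : ℝ} (hx : x ∈ S) :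
    HasDerivAt F (deriv F x) x :=
  ((hF.contDiffAt (hS.mem_nhds hx)).differentiableAt (by simp)).hasDerivAt

lemma smoothHop (hS : IsOpen S) (hv : ContDiffOn ℝ (⊤ : ℕ∞) v S) (hh : ContDiffOn ℝ (⊤ : ℕ∞) h S) :
    ContDiffOn ℝ (⊤ : ℕ∞) (Hop v h) S :=
  ((smoothDeriv hS (smoothDeriv hS hh)).neg).add (hv.mul hh)

lemma smoothAbOp (hS : IsOpen S) (hb : ContDiffOn ℝ (⊤ : ℕ∞) b S) (hh : ContDiffOn ℝ (⊤ : ℕ∞) h S) :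
    ContDiffOn ℝ (⊤ : ℕ∞) (AbOp b h) S :=
  (hb.mul (smoothDeriv hS hh)).sub ((contDiffOn_const.mul (smoothDeriv hS hb)).mul hh)

lemma deriv_Hop (hS : IsOpen S) (hv : ContDiffOn ℝ (⊤ : ℕ∞) v S) (hh : ContDiffOn ℝ (⊤ : ℕ∞) h S)
    {x : ℝ} (hx : x ∈ S) :
    deriv (Hop v h) x = -(deriv (deriv (deriv h)) x) + (deriv v x * h x + v x * deriv h x) :=
  (((hasD hS (smoothDeriv hS (smoothDeriv hS hh)) hx).neg).add
    ((hasD hS hv hx).mul (hasD hS hh hx))).deriv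

lemma deriv_AbOp (hS : IsOpen S) (hb : ContDiffOn ℝ (⊤ : ℕ∞) b S) (hh : ContDiffOn ℝ (⊤ : ℕ∞) h S)
    {x : ℝ} (hx : x ∈ S) :
    deriv (AbOp b h) x = (deriv b x * deriv h x + b x * deriv (deriv h) x)
      - ((1 / 2) * deriv (deriv b) x * h x + (1 / 2) * deriv b x * deriv h x) := by
  have H : HasDerivAt (AbOp b h)
      ((deriv b x * deriv h x + b x * deriv (deriv h) x)
        - (((1:ℂ)/2 * deriv (deriv b) x) * h x + ((1:ℂ)/2 * deriv b x) * deriv h x)) x :=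
    ((hasD hS hb hx).mul (hasD hS (smoothDeriv hS hh) hx)).sub
      ((((hasD hS (smoothDeriv hS hb) hx).const_mul ((1:ℂ)/2)).mul (hasD hS hh hx)))
  exact H.deriv.trans (by ring)

lemma deriv2_AbOp (hS : IsOpen S) (hb : ContDiffOn ℝ (⊤ : ℕ∞) b S) (hh : ContDiffOn ℝ (⊤ : ℕ∞) h S)
    {x : ℝ} (hx : x ∈ S) :
    deriv (deriv (AbOp b h)) x =
      (deriv (deriv b) x * deriv h x + 2 * deriv b x * deriv (deriv h) x
        + b x * deriv (deriv (deriv h)) x)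
      - ((1 / 2) * deriv (deriv (deriv b)) x * h x + deriv (deriv b) x * deriv h x
        + (1 / 2) * deriv b x * deriv (deriv h) x) := by
  have hev : deriv (AbOp b h) =ᶠ[nhds x]
      (fun y => (deriv b y * deriv h y + b y * deriv (deriv h) y)
        - (((1:ℂ)/2 * deriv (deriv b) y) * h y + ((1:ℂ)/2 * deriv b y) * deriv h y)) := by
    filter_upwards [hS.mem_nhds hx] with y hy
    rw [deriv_AbOp hS hb hh hy]
  have H : HasDerivAt
      (fun y => (deriv b y * deriv h y + b y * deriv (deriv h) y)
        - (((1:ℂ)/2 * deriv (deriv b) y) * h y + ((1:ℂ)/2 * deriv b y) * deriv h y))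
      (((deriv (deriv b) x * deriv h x + deriv b x * deriv (deriv h) x)
        + (deriv b x * deriv (deriv h) x + b x * deriv (deriv (deriv h)) x))
      - (((((1:ℂ)/2) * deriv (deriv (deriv b)) x) * h x
            + (((1:ℂ)/2) * deriv (deriv b) x) * deriv h x)
        + ((((1:ℂ)/2) * deriv (deriv b) x) * deriv h x
            + (((1:ℂ)/2) * deriv b x) * deriv (deriv h) x))) x :=
    (((hasD hS (smoothDeriv hS hb) hx).mul (hasD hS (smoothDeriv hS hh) hx)).add
        ((hasD hS hb hx).mul (hasD hS (smoothDeriv hS (smoothDeriv hS hh)) hx))).sub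
      ((((hasD hS (smoothDeriv hS (smoothDeriv hS hb)) hx).const_mul ((1:ℂ)/2)).mul
          (hasD hS hh hx)).add
        (((hasD hS (smoothDeriv hS hb) hx).const_mul ((1:ℂ)/2)).mul
          (hasD hS (smoothDeriv hS hh) hx)))
  rw [hev.deriv_eq]
  exact H.deriv.trans (by ring)

/-- The commutator identity for a single term. -/
lemma comm_term (hS : IsOpen S) (hv : ContDiffOn ℝ (⊤ : ℕ∞) v S) (hb : ContDiffOn ℝ (⊤ : ℕ∞) b S)
    (hh : ContDiffOn ℝ (⊤ : ℕ∞) h S) {x : ℝ} (hx : x ∈ S) :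
    AbOp b (Hop v h) x - Hop v (AbOp b h) x
      = -(2 * deriv b x) * Hop v h x
        + (b x * deriv v x + 2 * deriv b x * v x
            - (1 / 2) * deriv (deriv (deriv b)) x) * h x := by
  have e1 : AbOp b (Hop v h) x
      = b x * deriv (Hop v h) x - (1/2) * deriv b x * Hop v h x := rfl
  have e2 : Hop v (AbOp b h) x = -(deriv (deriv (AbOp b h)) x) + v x * AbOp b h x := rfl
  have e3 : AbOp b h x = b x * deriv h x - (1/2) * deriv b x * h x := rfl
  have e4 : Hop v h x = -(deriv (deriv h) x) + v x * h x := rfl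
  rw [e1, e2, e3, deriv_Hop hS hv hh hx, deriv2_AbOp hS hb hh hx]
  rw [e4]
  ring

lemma Hop_sum (hS : IsOpen S) {n : ℕ} {F : ℕ → ℝ → ℂ}
    (hF : ∀ j ∈ Finset.range n, ContDiffOn ℝ (⊤ : ℕ∞) (F j) S) {x : ℝ} (hx : x ∈ S) :
    Hop v (fun y => ∑ j ∈ Finset.range n, F j y) x = ∑ j ∈ Finset.range n, Hop v (F j) x := by
  have hd1 : deriv (fun y => ∑ j ∈ Finset.range n, F j y)
      =ᶠ[nhds x] (fun y => ∑ j ∈ Finset.range n, deriv (F j) y) := by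
    filter_upwards [hS.mem_nhds hx] with y hy
    exact deriv_fun_sum (fun j hj => (hasD hS (hF j hj) hy).differentiableAt)
  have hd2 : deriv (deriv (fun y => ∑ j ∈ Finset.range n, F j y)) x
      = ∑ j ∈ Finset.range n, deriv (deriv (F j)) x := by
    rw [hd1.deriv_eq]
    exact deriv_fun_sum (fun j hj => (hasD hS (smoothDeriv hS (hF j hj)) hx).differentiableAt)
  simp only [Hop, hd2, Finset.mul_sum, ← Finset.sum_neg_distrib, ← Finset.sum_add_distrib]

end Helpers

theorem commuting_operator_from_recursion
    (s t : ℝ) (g : ℕ) (v : ℝ → ℂ) (a : ℕ → ℝ → ℂ)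
    (hv : ContDiffOn ℝ (⊤ : ℕ∞) v (Ioo s t))
    (ha : ∀ j ≤ g, ContDiffOn ℝ (⊤ : ℕ∞) (a j) (Ioo s t))
    (ha0 : ∀ x ∈ Ioo s t, ∀ y ∈ Ioo s t, a 0 x = a 0 y)
    (hrec : ∀ j < g, ∀ x ∈ Ioo s t,
      deriv (deriv (deriv (a j))) x - 4 * v x * deriv (a j) x - 2 * deriv v x * a j x
        + 4 * deriv (a (j + 1)) x = 0)
    (hlast : ∀ x ∈ Ioo s t,
      deriv (deriv (deriv (a g))) x - 4 * v x * deriv (a g) x - 2 * deriv v x * a g x = 0) :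
    ∀ f : ℝ → ℂ, ContDiffOn ℝ (⊤ : ℕ∞) f (Ioo s t) →
      ∀ x ∈ Ioo s t, Aop g v a (Hop v f) x = Hop v (Aop g v a f) x := by
  intro f hf x hx
  have hS : IsOpen (Ioo s t) := isOpen_Ioo
  have hiter : ∀ k, ContDiffOn ℝ (⊤ : ℕ∞) ((Hop v)^[k] f) (Ioo s t) := by
    intro k
    induction k with
    | zero => exact hf
    | succ k ih => rw [Function.iterate_succ_apply']; exact smoothHop hS hv ih
  have hL : Aop g v a (Hop v f) x
      = ∑ j ∈ Finset.range (g + 1), AbOp (a j) (Hop v ((Hop v)^[g - j] f)) x := by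
    apply Finset.sum_congr rfl
    intro j _
    have hit : (Hop v)^[g - j] (Hop v f) = Hop v ((Hop v)^[g - j] f) := by
      rw [← Function.iterate_succ_apply, Function.iterate_succ_apply']
    show a j x * deriv ((Hop v)^[g - j] (Hop v f)) x
        - (1 / 2) * deriv (a j) x * ((Hop v)^[g - j] (Hop v f)) x = _
    rw [hit]
    rfl
  have hR : Hop v (Aop g v a f) x
      = ∑ j ∈ Finset.range (g + 1), Hop v (AbOp (a j) ((Hop v)^[g - j] f)) x := by
    have hA : Aop g v a f
        = fun y => ∑ j ∈ Finset.range (g + 1), AbOp (a j) ((Hop v)^[g - j] f) y := rfl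
    rw [hA]
    exact Hop_sum hS (fun j hj => smoothAbOp hS
      (ha j (Nat.lt_succ_iff.mp (Finset.mem_range.mp hj))) (hiter (g - j))) hx
  rw [hL, hR, ← sub_eq_zero, ← Finset.sum_sub_distrib]
  set u : ℕ → ℂ := fun j =>
    if j ≤ g then 2 * deriv (a j) x * ((Hop v)^[g + 1 - j] f x) else 0 with hu
  have hterm : ∀ j ∈ Finset.range (g + 1),
      AbOp (a j) (Hop v ((Hop v)^[g - j] f)) x - Hop v (AbOp (a j) ((Hop v)^[g - j] f)) x
        = u (j + 1) - u j := by
    intro j hj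
    have hjg : j ≤ g := Nat.lt_succ_iff.mp (Finset.mem_range.mp hj)
    rw [comm_term hS hv (ha j hjg) (hiter (g - j)) hx]
    have huj : u j = 2 * deriv (a j) x * ((Hop v)^[g + 1 - j] f x) := by
      rw [hu]; simp [hjg]
    have hpow : Hop v ((Hop v)^[g - j] f) = (Hop v)^[g + 1 - j] f := by
      have : g + 1 - j = (g - j) + 1 := by omega
      rw [this, Function.iterate_succ_apply']
    rcases Nat.lt_or_ge j g with hlt | hge
    · have huj1 : u (j + 1) = 2 * deriv (a (j + 1)) x * ((Hop v)^[g - j] f x) := by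
        rw [hu]
        have h1 : g + 1 - (j + 1) = g - j := by omega
        simp only [Nat.succ_le_of_lt hlt, if_pos, h1]
      have hc : a j x * deriv v x + 2 * deriv (a j) x * v x
          - (1 / 2) * deriv (deriv (deriv (a j))) x = 2 * deriv (a (j + 1)) x := by
        have h2 := hrec j hlt x hx
        linear_combination (-1/2 : ℂ) * h2
      rw [hc, huj, huj1, hpow]
      ring
    · have hjeq : j = g := le_antisymm hjg hge
      subst hjeq
      have huj1 : u (j + 1) = 0 := by rw [hu]; simp
      have hc : a j x * deriv v x + 2 * deriv (a j) x * v x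
          - (1 / 2) * deriv (deriv (deriv (a j))) x = 0 := by
        have h2 := hlast x hx
        linear_combination (-1/2 : ℂ) * h2
      rw [hc, huj, huj1, hpow]
      ring
  rw [Finset.sum_congr rfl hterm, Finset.sum_range_sub u (g + 1)]
  have hu0 : deriv (a 0) x = 0 := by
    have hev : a 0 =ᶠ[nhds x] fun _ => a 0 x := by
      filter_upwards [hS.mem_nhds hx] with y hy
      exact ha0 y hy x hx
    rw [hev.deriv_eq, deriv_const]
  have hug : u (g + 1) = 0 := by rw [hu]; simp
  rw [hug, hu]
  simp [hu0]
end

section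
/- Let U ⊆ ℂ be open, g₂ ∈ ℂ, and let p : U → ℂ be holomorphic with p''(x) = 6 p(x)² − g₂/2 on U. Fix E ∈ ℂ and set v(x) = 6 p(x) and Ξ(x) = E² + 3 p(x) E + 9 ( p(x)² − g₂/4 ). Then Ξ satisfies Ξ'''(x) − 4 ( v(x) − E ) Ξ'(x) − 2 v'(x) Ξ(x) = 0 on U. -/
/-! Write `Ξ = c₀ + c₁ p + c₂ p²` with `c₂ = 9`, `c₁ = 3E`. Since `Ξ` is quadratic in `p`, its third
derivative is `6 c₂ p' p'' + (c₁ + 2 c₂ p) p'''`, and differentiating the Weierstrass equation gives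
`p''' = 12 p p'`. Every term of the equation then carries the factor `p'`, and what remains is a
polynomial identity in `p`, `E`, `g₂`. -/

open Set

lemma hasDerivAt_quadratic_comp {𝕜 : Type*} [NontriviallyNormedField 𝕜] {p : 𝕜 → 𝕜} {p' x : 𝕜}
    (hp : HasDerivAt p p' x) (c₀ c₁ c₂ : 𝕜) :
    HasDerivAt (fun y => c₀ + c₁ * p y + c₂ * p y ^ 2) ((c₁ + 2 * c₂ * p x) * p') x := by
  refine (((hp.const_mul c₁).const_add c₀).fun_add ((hp.fun_pow 2).const_mul c₂)).congr_deriv ?_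
  push_cast
  ring

section Complex

variable {U : Set ℂ} {p : ℂ → ℂ}

lemma deriv_quadratic_comp_eqOn (hU : IsOpen U) (hp : DifferentiableOn ℂ p U) (c₀ c₁ c₂ : ℂ) :
    EqOn (deriv fun y => c₀ + c₁ * p y + c₂ * p y ^ 2)
      (fun y => (c₁ + 2 * c₂ * p y) * deriv p y) U := fun _ hy =>
  (hasDerivAt_quadratic_comp (hp.differentiableAt (hU.mem_nhds hy)).hasDerivAt c₀ c₁ c₂).deriv

lemma deriv_deriv_quadratic_comp_eqOn (hU : IsOpen U) (hp : DifferentiableOn ℂ p U)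
    (c₀ c₁ c₂ : ℂ) :
    EqOn (deriv (deriv fun y => c₀ + c₁ * p y + c₂ * p y ^ 2))
      (fun y => 2 * c₂ * deriv p y ^ 2 + (c₁ + 2 * c₂ * p y) * deriv (deriv p) y) U := by
  intro y hy
  have hp₁ := (hp.differentiableAt (hU.mem_nhds hy)).hasDerivAt
  have hp₂ := ((hp.deriv hU).differentiableAt (hU.mem_nhds hy)).hasDerivAt
  rw [(deriv_quadratic_comp_eqOn hU hp c₀ c₁ c₂).deriv hU hy,
    ((hp₁.const_mul (2 * c₂)).const_add c₁ |>.fun_mul hp₂).deriv]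
  ring

lemma deriv_deriv_deriv_quadratic_comp (hU : IsOpen U) (hp : DifferentiableOn ℂ p U)
    (c₀ c₁ c₂ : ℂ) {x : ℂ} (hx : x ∈ U) :
    deriv (deriv (deriv fun y => c₀ + c₁ * p y + c₂ * p y ^ 2)) x =
      6 * c₂ * deriv p x * deriv (deriv p) x
        + (c₁ + 2 * c₂ * p x) * deriv (deriv (deriv p)) x := by
  have hp' := hp.deriv hU
  have hp₁ := (hp.differentiableAt (hU.mem_nhds hx)).hasDerivAt
  have hp₂ := (hp'.differentiableAt (hU.mem_nhds hx)).hasDerivAt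
  have hp₃ := ((hp'.deriv hU).differentiableAt (hU.mem_nhds hx)).hasDerivAt
  rw [(deriv_deriv_quadratic_comp_eqOn hU hp c₀ c₁ c₂).deriv hU hx,
    (((hp₂.fun_pow 2).const_mul (2 * c₂)).fun_add
      ((hp₁.const_mul (2 * c₂)).const_add c₁ |>.fun_mul hp₃)).deriv]
  push_cast
  ring

lemma deriv_deriv_deriv_of_weierstrass (hU : IsOpen U) (hp : DifferentiableOn ℂ p U) {g₂ : ℂ}
    (hp'' : ∀ x ∈ U, deriv (deriv p) x = 6 * p x ^ 2 - g₂ / 2) {x : ℂ} (hx : x ∈ U) :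
    deriv (deriv (deriv p)) x = 12 * p x * deriv p x := by
  have hp₁ := (hp.differentiableAt (hU.mem_nhds hx)).hasDerivAt
  have hp''_eqOn : EqOn (deriv (deriv p)) (fun y => 6 * p y ^ 2 - g₂ / 2) U := hp''
  rw [hp''_eqOn.deriv hU hx, (((hp₁.fun_pow 2).const_mul 6).sub_const (g₂ / 2)).deriv]
  push_cast
  ring

end Complex

theorem Xi_solves_third_order_equation_for_Lame_l2
    (U : Set ℂ) (hU : IsOpen U) (g₂ E : ℂ) (p : ℂ → ℂ)
    (hp : DifferentiableOn ℂ p U)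
    (hp'' : ∀ x ∈ U, deriv (deriv p) x = 6 * (p x) ^ 2 - g₂ / 2) :
    ∀ x ∈ U,
      deriv (deriv (deriv (fun y => E ^ 2 + 3 * p y * E + 9 * ((p y) ^ 2 - g₂ / 4)))) x
        - 4 * (6 * p x - E) *
            deriv (fun y => E ^ 2 + 3 * p y * E + 9 * ((p y) ^ 2 - g₂ / 4)) x
        - 2 * deriv (fun y => 6 * p y) x *
            (E ^ 2 + 3 * p x * E + 9 * ((p x) ^ 2 - g₂ / 4)) = 0 := by
  intro x hx
  have hΞ : (fun y => E ^ 2 + 3 * p y * E + 9 * ((p y) ^ 2 - g₂ / 4)) =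
      fun y => (E ^ 2 - 9 * g₂ / 4) + 3 * E * p y + 9 * p y ^ 2 := by
    funext y
    ring
  have hpx := hp.differentiableAt (hU.mem_nhds hx)
  rw [hΞ, deriv_deriv_deriv_quadratic_comp hU hp _ _ _ hx,
    deriv_deriv_deriv_of_weierstrass hU hp hp'' hx, hp'' x hx,
    deriv_quadratic_comp_eqOn hU hp _ _ _ hx, deriv_const_mul _ hpx]
  ring
end

section
/- Let U ⊆ ℂ be open, g₂, g₃ ∈ ℂ, and let p : U → ℂ be holomorphic with (p'(x))² = 4 p(x)³ − g₂ p(x) − g₃ and p''(x) = 6 p(x)² − g₂/2 on U. Fix E ∈ ℂ and set v(x) = 6 p(x) and Ξ(x) = E² + 3 p(x) E + 9 ( p(x)² − g₂/4 ). Then for every x ∈ U one has Ξ(x)² ( E − v(x) ) + (1/2) Ξ(x) Ξ''(x) − (1/4) (Ξ'(x))² = (E² − 3 g₂)(E³ − (9/4) g₂ E − (27/4) g₃). -/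
/-!
`Ξ` is a quadratic polynomial in `℘`, so by the chain rule `Ξ'` and `Ξ''` are polynomials in
`℘`, `℘'` and `℘''`. Eliminating `℘'²` and `℘''` with the two differential equations of `℘`
turns `Q(E)` into a polynomial in `℘` alone, whose coefficients of positive degree all vanish.
-/

open Filter Topology

section SecondDerivComp

variable {𝕜 : Type*} [NontriviallyNormedField 𝕜] {g p : 𝕜 → 𝕜} {x : 𝕜}

theorem deriv_deriv_comp (hg : Differentiable 𝕜 g) (hg' : Differentiable 𝕜 (deriv g))
    (hp : ∀ᶠ y in 𝓝 x, DifferentiableAt 𝕜 p y) (hp' : DifferentiableAt 𝕜 (deriv p) x) :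
    deriv (deriv (g ∘ p)) x
      = deriv (deriv g) (p x) * deriv p x ^ 2 + deriv g (p x) * deriv (deriv p) x := by
  have chain : deriv (g ∘ p) =ᶠ[𝓝 x] fun y => deriv g (p y) * deriv p y := by
    filter_upwards [hp] with y hy using deriv_comp y (hg (p y)) hy
  have hpx : DifferentiableAt 𝕜 p x := hp.self_of_nhds
  have outer : HasDerivAt (fun y => deriv g (p y)) (deriv (deriv g) (p x) * deriv p x) x :=
    (hg' (p x)).hasDerivAt.comp x hpx.hasDerivAt
  rw [chain.deriv_eq]
  exact (outer.mul hp'.hasDerivAt).deriv.trans (by ring)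

end SecondDerivComp

/-- `Ξ(x, E) = lameXi E g₂ (℘ x)`. -/
def lameXi {K : Type*} [Field K] (E g₂ : K) (z : K) : K :=
  E ^ 2 + 3 * z * E + 9 * (z ^ 2 - g₂ / 4)

section LameXiDeriv

variable {𝕜 : Type*} [NontriviallyNormedField 𝕜]

theorem hasDerivAt_lameXi (E g₂ z : 𝕜) : HasDerivAt (lameXi E g₂) (3 * E + 18 * z) z := by
  have h := (((hasDerivAt_id z).const_mul 3).mul_const E).const_add (E ^ 2) |>.add
    ((((hasDerivAt_id z).pow 2).sub_const (g₂ / 4)).const_mul 9)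
  exact h.congr_deriv (by
    simp only [mul_one, Nat.cast_ofNat, id_eq, Nat.add_one_sub_one, pow_one, add_right_inj]; ring)

theorem deriv_lameXi (E g₂ : 𝕜) : deriv (lameXi E g₂) = fun z => 3 * E + 18 * z :=
  funext fun z => (hasDerivAt_lameXi E g₂ z).deriv

theorem differentiable_lameXi (E g₂ : 𝕜) : Differentiable 𝕜 (lameXi E g₂) :=
  fun z => (hasDerivAt_lameXi E g₂ z).differentiableAt

theorem deriv_deriv_lameXi (E g₂ z : 𝕜) : deriv (deriv (lameXi E g₂)) z = 18 := by
  rw [deriv_lameXi]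
  exact ((hasDerivAt_id z).const_mul 18 |>.const_add (3 * E)).deriv.trans (mul_one 18)

end LameXiDeriv

theorem lame_spectral_identity {K : Type*} [Field K] [CharZero K] (g₂ g₃ E P P' P'' : K)
    (h' : P' ^ 2 = 4 * P ^ 3 - g₂ * P - g₃) (h'' : P'' = 6 * P ^ 2 - g₂ / 2) :
    lameXi E g₂ P ^ 2 * (E - 6 * P)
        + (1 / 2) * lameXi E g₂ P * (18 * P' ^ 2 + (3 * E + 18 * P) * P'')
        - (1 / 4) * ((3 * E + 18 * P) * P') ^ 2
      = (E ^ 2 - 3 * g₂) * (E ^ 3 - (9 / 4) * g₂ * E - (27 / 4) * g₃) := by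
  subst h''
  unfold lameXi
  linear_combination
    (9 * (E ^ 2 + 3 * P * E + 9 * (P ^ 2 - g₂ / 4)) - (3 * E + 18 * P) ^ 2 / 4) * h'

theorem spectral_polynomial_for_Lame_l2
    (U : Set ℂ) (hU : IsOpen U) (g₂ g₃ E : ℂ) (p : ℂ → ℂ)
    (hp : DifferentiableOn ℂ p U)
    (hp' : ∀ x ∈ U, (deriv p x) ^ 2 = 4 * (p x) ^ 3 - g₂ * p x - g₃)
    (hp'' : ∀ x ∈ U, deriv (deriv p) x = 6 * (p x) ^ 2 - g₂ / 2) :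
    ∀ x ∈ U,
      (E ^ 2 + 3 * p x * E + 9 * ((p x) ^ 2 - g₂ / 4)) ^ 2 * (E - 6 * p x)
        + (1 / 2) * (E ^ 2 + 3 * p x * E + 9 * ((p x) ^ 2 - g₂ / 4)) *
            deriv (deriv (fun y => E ^ 2 + 3 * p y * E + 9 * ((p y) ^ 2 - g₂ / 4))) x
        - (1 / 4) * (deriv (fun y => E ^ 2 + 3 * p y * E + 9 * ((p y) ^ 2 - g₂ / 4)) x) ^ 2
      = (E ^ 2 - 3 * g₂) * (E ^ 3 - (9 / 4) * g₂ * E - (27 / 4) * g₃) := by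
  intro x hx
  have hpa : AnalyticOnNhd ℂ p U := hp.analyticOnNhd hU
  have hp_near : ∀ᶠ y in 𝓝 x, DifferentiableAt ℂ p y := by
    filter_upwards [hU.mem_nhds hx] with y hy using (hpa y hy).differentiableAt
  have hXi' : deriv (lameXi E g₂ ∘ p) x = (3 * E + 18 * p x) * deriv p x := by
    rw [deriv_comp x (differentiable_lameXi E g₂ _) hp_near.self_of_nhds, deriv_lameXi]
  have hXi'' : deriv (deriv (lameXi E g₂ ∘ p)) x
      = 18 * deriv p x ^ 2 + (3 * E + 18 * p x) * deriv (deriv p) x := by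
    rw [deriv_deriv_comp (differentiable_lameXi E g₂) (by rw [deriv_lameXi]; fun_prop) hp_near
      (hpa.deriv x hx).differentiableAt, deriv_deriv_lameXi, deriv_lameXi]
  change lameXi E g₂ (p x) ^ 2 * (E - 6 * p x)
      + (1 / 2) * lameXi E g₂ (p x) * deriv (deriv (lameXi E g₂ ∘ p)) x
      - (1 / 4) * deriv (lameXi E g₂ ∘ p) x ^ 2 = _
  rw [hXi', hXi'']
  exact lame_spectral_identity g₂ g₃ E (p x) (deriv p x) _ (hp' x hx) (hp'' x hx)
end

section
/- Let v : ℝ → ℝ be continuous with v(x + T) = v(x) for all x, where T > 0, and let E ∈ ℝ. Let f₁, f₂ : ℝ → ℝ be twice differentiable solutions of −f'' + (v − E) f = 0 with f₁(0) = 1, f₁'(0) = 0, f₂(0) = 0, f₂'(0) = 1. Let ε ∈ {1, −1}. If f₁(T) + f₂'(T) = 2ε, then there exists a twice differentiable function f : ℝ → ℝ, not identically zero, with −f'' + (v − E) f = 0 and f(x + T) = ε f(x) for all x ∈ ℝ. -/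
/-- A solution of the Schrödinger-type equation with potential `v` and energy `E`. -/
def SchrSol (v : ℝ → ℝ) (E : ℝ) (f : ℝ → ℝ) : Prop :=
  Differentiable ℝ f ∧ Differentiable ℝ (deriv f) ∧
    ∀ x, -(deriv (deriv f) x) + (v x - E) * f x = 0

lemma schrSol_second_deriv {v : ℝ → ℝ} {E : ℝ} {f : ℝ → ℝ} (hf : SchrSol v E f) (x : ℝ) :
    deriv (deriv f) x = (v x - E) * f x := by
  have := hf.2.2 x; linarith

lemma schrSol_comb {v : ℝ → ℝ} {E : ℝ} {f g : ℝ → ℝ} (hf : SchrSol v E f) (hg : SchrSol v E g)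
    (a b : ℝ) :
    SchrSol v E (fun x => a * f x + b * g x) ∧
      (∀ x, deriv (fun x => a * f x + b * g x) x = a * deriv f x + b * deriv g x) := by
  obtain ⟨hf1, hf2, hf3⟩ := hf
  obtain ⟨hg1, hg2, hg3⟩ := hg
  have hder : ∀ x, deriv (fun x => a * f x + b * g x) x = a * deriv f x + b * deriv g x := by
    intro x
    exact (((hf1 x).hasDerivAt.const_mul a).add ((hg1 x).hasDerivAt.const_mul b)).deriv
  have hderfun : deriv (fun x => a * f x + b * g x) = fun x => a * deriv f x + b * deriv g x :=
    funext hder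
  have hder2 : ∀ x, deriv (deriv (fun x => a * f x + b * g x)) x
      = a * deriv (deriv f) x + b * deriv (deriv g) x := by
    intro x
    rw [hderfun]
    exact (((hf2 x).hasDerivAt.const_mul a).add ((hg2 x).hasDerivAt.const_mul b)).deriv
  refine ⟨⟨(hf1.const_mul a).add (hg1.const_mul b), ?_, ?_⟩, hder⟩
  · rw [hderfun]; exact (hf2.const_mul a).add (hg2.const_mul b)
  · intro x
    rw [hder2 x]
    have e1 := hf3 x
    have e2 := hg3 x
    linear_combination a * e1 + b * e2

lemma schrSol_shift {v : ℝ → ℝ} {E T : ℝ} {f : ℝ → ℝ} (hvper : ∀ x, v (x + T) = v x)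
    (hf : SchrSol v E f) :
    SchrSol v E (fun x => f (x + T)) ∧
      (∀ x, deriv (fun x => f (x + T)) x = deriv f (x + T)) := by
  obtain ⟨hf1, hf2, hf3⟩ := hf
  have hder : ∀ x, deriv (fun x => f (x + T)) x = deriv f (x + T) := fun x =>
    deriv_comp_add_const f T x
  have hderfun : deriv (fun x => f (x + T)) = fun x => deriv f (x + T) := funext hder
  have hder2 : ∀ x, deriv (deriv (fun x => f (x + T))) x = deriv (deriv f) (x + T) := by
    intro x
    rw [hderfun]
    exact deriv_comp_add_const (deriv f) T x
  refine ⟨⟨hf1.comp (differentiable_id.add_const T), ?_, ?_⟩, hder⟩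
  · rw [hderfun]; exact hf2.comp (differentiable_id.add_const T)
  · intro x
    rw [hder2 x, ← hvper x]
    exact hf3 (x + T)

lemma schrSol_wronskian {v : ℝ → ℝ} {E : ℝ} {f g : ℝ → ℝ}
    (hf : SchrSol v E f) (hg : SchrSol v E g) (x : ℝ) :
    f x * deriv g x - deriv f x * g x = f 0 * deriv g 0 - deriv f 0 * g 0 := by
  obtain ⟨hf1, hf2, hf3⟩ := hf
  obtain ⟨hg1, hg2, hg3⟩ := hg
  have hW : Differentiable ℝ (fun x => f x * deriv g x - deriv f x * g x) :=
    (hf1.mul hg2).sub (hf2.mul hg1)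
  have hW' : ∀ y, deriv (fun x => f x * deriv g x - deriv f x * g x) y = 0 := by
    intro y
    have h : HasDerivAt (fun x => f x * deriv g x - deriv f x * g x)
        ((deriv f y * deriv g y + f y * deriv (deriv g) y)
          - (deriv (deriv f) y * g y + deriv f y * deriv g y)) y :=
      (((hf1 y).hasDerivAt.mul (hg2 y).hasDerivAt)).sub
        (((hf2 y).hasDerivAt.mul (hg1 y).hasDerivAt))
    rw [h.deriv, schrSol_second_deriv ⟨hf1, hf2, hf3⟩, schrSol_second_deriv ⟨hg1, hg2, hg3⟩]
    ring
  exact is_const_of_deriv_eq_zero hW hW' x 0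

/-- A solution vanishing to first order at 0 vanishes identically, given the normalized
fundamental system. -/
lemma schrSol_zero {v : ℝ → ℝ} {E : ℝ} {f₁ f₂ g : ℝ → ℝ}
    (hs₁ : SchrSol v E f₁) (hs₂ : SchrSol v E f₂)
    (h₁0 : f₁ 0 = 1) (h₁0' : deriv f₁ 0 = 0)
    (h₂0 : f₂ 0 = 0) (h₂0' : deriv f₂ 0 = 1)
    (hg : SchrSol v E g) (hg0 : g 0 = 0) (hg0' : deriv g 0 = 0) (x : ℝ) :
    g x = 0 := by
  have h1 : g x * deriv f₁ x - deriv g x * f₁ x = 0 := by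
    rw [schrSol_wronskian hg hs₁ x, hg0, hg0']; ring
  have h2 : g x * deriv f₂ x - deriv g x * f₂ x = 0 := by
    rw [schrSol_wronskian hg hs₂ x, hg0, hg0']; ring
  have h3 : f₁ x * deriv f₂ x - deriv f₁ x * f₂ x = 1 := by
    rw [schrSol_wronskian hs₁ hs₂ x, h₁0, h₁0', h₂0, h₂0']; ring
  linear_combination f₁ x * h2 - f₂ x * h1 - g x * h3

theorem periodic_or_antiperiodic_solution_from_trace
    (T E : ℝ) (hT : 0 < T) (v : ℝ → ℝ) (hv : Continuous v)
    (hvper : ∀ x, v (x + T) = v x)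
    (f₁ f₂ : ℝ → ℝ)
    (hd₁ : Differentiable ℝ f₁) (hd₁' : Differentiable ℝ (deriv f₁))
    (hd₂ : Differentiable ℝ f₂) (hd₂' : Differentiable ℝ (deriv f₂))
    (he₁ : ∀ x, -(deriv (deriv f₁) x) + (v x - E) * f₁ x = 0)
    (he₂ : ∀ x, -(deriv (deriv f₂) x) + (v x - E) * f₂ x = 0)
    (h₁0 : f₁ 0 = 1) (h₁0' : deriv f₁ 0 = 0)
    (h₂0 : f₂ 0 = 0) (h₂0' : deriv f₂ 0 = 1)
    (ε : ℝ) (hε : ε = 1 ∨ ε = -1)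
    (htr : f₁ T + deriv f₂ T = 2 * ε) :
    ∃ f : ℝ → ℝ, Differentiable ℝ f ∧ Differentiable ℝ (deriv f) ∧
      (∃ x, f x ≠ 0) ∧
      (∀ x, -(deriv (deriv f) x) + (v x - E) * f x = 0) ∧
      (∀ x, f (x + T) = ε * f x) := by
  have hs₁ : SchrSol v E f₁ := ⟨hd₁, hd₁', he₁⟩
  have hs₂ : SchrSol v E f₂ := ⟨hd₂, hd₂', he₂⟩
  have hε2 : ε * ε = 1 := by rcases hε with h | h <;> rw [h] <;> norm_num
  have hW12 : f₁ T * deriv f₂ T - deriv f₁ T * f₂ T = 1 := by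
    rw [schrSol_wronskian hs₁ hs₂ T, h₁0, h₁0', h₂0, h₂0']; ring
  -- the key step: given an eigenvector (a, b) of the monodromy matrix,
  -- the combination a f₁ + b f₂ is (anti)periodic.
  have key : ∀ a b : ℝ, a * f₁ T + b * f₂ T = ε * a →
      a * deriv f₁ T + b * deriv f₂ T = ε * b →
      ∀ x, a * f₁ (x + T) + b * f₂ (x + T) = ε * (a * f₁ x + b * f₂ x) := by
    intro a b hab1 hab2 x
    obtain ⟨hsf, hderf⟩ := schrSol_comb hs₁ hs₂ a b
    obtain ⟨hsfT, hderfT⟩ := schrSol_shift hvper hsf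
    obtain ⟨hsg, hderg⟩ := schrSol_comb hsfT hsf 1 (-ε)
    have hg0 : (fun x => 1 * (a * f₁ (x + T) + b * f₂ (x + T))
        + (-ε) * (a * f₁ x + b * f₂ x)) 0 = 0 := by
      simp only [zero_add, one_mul]
      rw [h₁0, h₂0]
      linear_combination hab1
    have hg0' : deriv (fun x => 1 * (a * f₁ (x + T) + b * f₂ (x + T))
        + (-ε) * (a * f₁ x + b * f₂ x)) 0 = 0 := by
      rw [hderg 0, hderfT 0, zero_add, hderf T, hderf 0, h₁0', h₂0']
      linear_combination hab2
    have := schrSol_zero hs₁ hs₂ h₁0 h₁0' h₂0 h₂0' hsg hg0 hg0' x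
    simp only [one_mul, neg_mul] at this
    linarith
  by_cases hc : f₂ T = 0
  · -- in this case deriv f₂ T = ε and f₂ itself works
    have hd : deriv f₂ T = ε := by
      have hsq : (deriv f₂ T - ε) ^ 2 = 0 := by
        rw [hc] at hW12
        linear_combination -hW12 + deriv f₂ T * htr + hε2
      have := pow_eq_zero_iff (n := 2) (by norm_num) |>.mp hsq
      linarith
    refine ⟨f₂, hd₂, hd₂', ⟨?_, he₂, ?_⟩⟩
    · by_contra h
      push_neg at h
      have : f₂ = fun _ => (0 : ℝ) := funext h
      rw [this] at h₂0'
      simp at h₂0'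
    · intro x
      have := key 0 1 (by rw [hc]; ring) (by rw [hd]; ring) x
      simpa using this
  · -- eigenvector (f₂ T, ε - f₁ T)
    set a : ℝ := f₂ T with ha
    set b : ℝ := ε - f₁ T with hb
    have hab1 : a * f₁ T + b * f₂ T = ε * a := by rw [ha, hb]; ring
    have hab2 : a * deriv f₁ T + b * deriv f₂ T = ε * b := by
      rw [ha, hb]
      linear_combination -hW12 + ε * htr + hε2
    obtain ⟨⟨hdf, hdf', hef⟩, _⟩ := schrSol_comb hs₁ hs₂ a b
    refine ⟨fun x => a * f₁ x + b * f₂ x, hdf, hdf', ⟨⟨0, ?_⟩, hef, key a b hab1 hab2⟩⟩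
    show a * f₁ 0 + b * f₂ 0 ≠ 0
    rw [h₁0, h₂0]
    simpa using hc
end

section
/- Let v : ℝ → ℝ be continuous with v(x + T) = v(x) for all x, where T > 0, and let E ∈ ℝ. Let f₁, f₂ : ℝ → ℝ be twice differentiable solutions of −f'' + (v − E) f = 0 with f₁(0) = 1, f₁'(0) = 0, f₂(0) = 0, f₂'(0) = 1. If |f₁(T) + f₂'(T)| > 2, then there exists a twice differentiable solution f : ℝ → ℝ of −f'' + (v − E) f = 0 that is unbounded on ℝ. -/
/-!
The monodromy matrix `M = fundamentalMatrix f₁ f₂ T` has determinant `1` because the Wronskian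
`det (fundamentalMatrix f₁ f₂ x)` is constant, so `|tr M| > 2` gives a real eigenvalue `μ` with
`|μ| > 1`. If `u` is an eigenvector, `f = u₀ f₁ + u₁ f₂` has Cauchy data at `T` equal to `μ` times its data
at `0`; since `x ↦ f (x + T)` solves the same equation, uniqueness for the linear ODE gives
`f (x + T) = μ f x`, hence `|f (x + n T)| = |μ| ^ n |f x|` is unbounded.
-/

open Set Function Matrix

section Deriv

variable {𝕜 F : Type*} [NontriviallyNormedField 𝕜] [NormedAddCommGroup F] [NormedSpace 𝕜 F]
  {f g : 𝕜 → F}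

theorem deriv_add_eq_add (hf : Differentiable 𝕜 f) (hg : Differentiable 𝕜 g) :
    deriv (f + g) = deriv f + deriv g :=
  funext fun x => deriv_add (hf x) (hg x)

theorem deriv_const_smul_eq_smul (c : 𝕜) (f : 𝕜 → F) : deriv (c • f) = c • deriv f :=
  funext fun _ => deriv_const_smul_field c f

theorem deriv_comp_add_const_eq (f : 𝕜 → F) (a : 𝕜) :
    deriv (fun x => f (x + a)) = fun x => deriv f (x + a) :=
  funext fun x => deriv_comp_add_const f a x

end Deriv

theorem lipschitzWith_snd_const_mul_fst (c : ℝ) :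
    LipschitzWith (max 1 ‖c‖₊) (fun p : ℝ × ℝ => (p.2, c * p.1)) := by
  have h := LipschitzWith.prod_snd.prodMk
    ((lipschitzWith_smul (β := ℝ) c).comp (LipschitzWith.prod_fst (β := ℝ)))
  rwa [mul_one] at h

theorem exists_one_lt_abs_root_of_two_lt_abs {t : ℝ} (ht : 2 < |t|) :
    ∃ μ : ℝ, μ ^ 2 - t * μ + 1 = 0 ∧ 1 < |μ| := by
  have hs := Real.sq_sqrt (show 0 ≤ t ^ 2 - 4 by nlinarith [sq_abs t, abs_nonneg t])
  have hs₀ := Real.sqrt_nonneg (t ^ 2 - 4)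
  rcases lt_abs.1 ht with ht | ht
  · refine ⟨(t + √(t ^ 2 - 4)) / 2, by linear_combination hs / 4, ?_⟩
    exact lt_abs.2 (Or.inl (by linarith))
  · refine ⟨(t - √(t ^ 2 - 4)) / 2, by linear_combination hs / 4, ?_⟩
    exact lt_abs.2 (Or.inr (by linarith))

theorem Matrix.exists_mulVec_eq_smul_of_det_eq_one_of_two_lt_abs_trace
    {M : Matrix (Fin 2) (Fin 2) ℝ} (hdet : M.det = 1) (htr : 2 < |M.trace|) :
    ∃ μ : ℝ, 1 < |μ| ∧ ∃ u ≠ 0, M *ᵥ u = μ • u := by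
  obtain ⟨μ, hroot, hμ⟩ := exists_one_lt_abs_root_of_two_lt_abs htr
  have hchar : (μ • 1 - M).det = 0 := by
    rw [det_fin_two] at hdet ⊢
    rw [trace_fin_two] at hroot
    simp only [sub_apply, smul_apply, one_apply_eq, one_apply_ne zero_ne_one,
      one_apply_ne one_ne_zero, smul_eq_mul]
    linear_combination hroot + hdet
  obtain ⟨u, hu, hMu⟩ := exists_mulVec_eq_zero_iff.2 hchar
  refine ⟨μ, hμ, u, hu, ?_⟩
  rw [sub_mulVec, smul_mulVec, one_mulVec, sub_eq_zero] at hMu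
  exact hMu.symm

theorem apply_add_nat_mul_eq_pow_mul {f : ℝ → ℝ} {T μ : ℝ} (h : ∀ x, f (x + T) = μ * f x)
    (n : ℕ) (x : ℝ) : f (x + n * T) = μ ^ n * f x := by
  induction n with
  | zero => simp
  | succ n ih =>
    rw [Nat.cast_succ, add_one_mul, ← add_assoc, h, ih, pow_succ, mul_comm _ μ, mul_assoc]

theorem not_exists_abs_le_of_apply_add_eq_mul {f : ℝ → ℝ} {T μ : ℝ}
    (h : ∀ x, f (x + T) = μ * f x) (hμ : 1 < |μ|) (hf : f ≠ 0) : ¬ ∃ C, ∀ x, |f x| ≤ C := by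
  rintro ⟨C, hC⟩
  obtain ⟨x, hx⟩ := Function.ne_iff.1 hf
  have hx : 0 < |f x| := abs_pos.2 hx
  obtain ⟨n, hn⟩ := pow_unbounded_of_one_lt (C / |f x|) hμ
  have := hC (x + n * T)
  rw [apply_add_nat_mul_eq_pow_mul h, abs_mul, abs_pow] at this
  rw [div_lt_iff₀ hx] at hn
  linarith

noncomputable def cauchyData (f : ℝ → ℝ) (x : ℝ) : Fin 2 → ℝ := ![f x, deriv f x]

noncomputable def fundamentalMatrix (f g : ℝ → ℝ) (x : ℝ) : Matrix (Fin 2) (Fin 2) ℝ :=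
  !![f x, g x; deriv f x, deriv g x]

theorem fundamentalMatrix_mulVec {f g : ℝ → ℝ} (hf : Differentiable ℝ f)
    (hg : Differentiable ℝ g) (u : Fin 2 → ℝ) (x : ℝ) :
    fundamentalMatrix f g x *ᵥ u = cauchyData (u 0 • f + u 1 • g) x := by
  rw [cauchyData, deriv_add_eq_add (hf.const_smul _) (hg.const_smul _), deriv_const_smul_eq_smul,
    deriv_const_smul_eq_smul]
  ext i
  fin_cases i <;> simp [fundamentalMatrix, mulVec, dotProduct, mul_comm]

structure IsSchrodingerSolution (q f : ℝ → ℝ) : Prop where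
  differentiable : Differentiable ℝ f
  differentiable_deriv : Differentiable ℝ (deriv f)
  deriv_deriv : ∀ x, deriv (deriv f) x = q x * f x

namespace IsSchrodingerSolution

variable {q f g : ℝ → ℝ}

theorem add (hf : IsSchrodingerSolution q f) (hg : IsSchrodingerSolution q g) :
    IsSchrodingerSolution q (f + g) where
  differentiable := hf.differentiable.add hg.differentiable
  differentiable_deriv := by
    rw [deriv_add_eq_add hf.differentiable hg.differentiable]
    exact hf.differentiable_deriv.add hg.differentiable_deriv
  deriv_deriv x := by
    rw [deriv_add_eq_add hf.differentiable hg.differentiable,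
      deriv_add_eq_add hf.differentiable_deriv hg.differentiable_deriv]
    simp only [Pi.add_apply, hf.deriv_deriv, hg.deriv_deriv, mul_add]

theorem const_smul (hf : IsSchrodingerSolution q f) (c : ℝ) : IsSchrodingerSolution q (c • f) where
  differentiable := hf.differentiable.const_smul c
  differentiable_deriv := by
    rw [deriv_const_smul_eq_smul]; exact hf.differentiable_deriv.const_smul c
  deriv_deriv x := by
    rw [deriv_const_smul_eq_smul, deriv_const_smul_eq_smul, Pi.smul_apply, Pi.smul_apply,
      hf.deriv_deriv, smul_eq_mul, smul_eq_mul, mul_left_comm]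

theorem comp_add_const {T : ℝ} (hf : IsSchrodingerSolution q f) (hq : Periodic q T) :
    IsSchrodingerSolution q (fun x => f (x + T)) where
  differentiable := hf.differentiable.comp (differentiable_id.add_const T)
  differentiable_deriv := by
    rw [deriv_comp_add_const_eq]
    exact hf.differentiable_deriv.comp (differentiable_id.add_const T)
  deriv_deriv x := by
    rw [deriv_comp_add_const_eq, deriv_comp_add_const, hf.deriv_deriv, hq]

theorem det_fundamentalMatrix_eq (hf : IsSchrodingerSolution q f) (hg : IsSchrodingerSolution q g)
    (x y : ℝ) : (fundamentalMatrix f g x).det = (fundamentalMatrix f g y).det := by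
  have hW : ∀ t, HasDerivAt (fun t => f t * deriv g t - g t * deriv f t) 0 t := fun t => by
    refine (((hf.differentiable t).hasDerivAt.mul (hg.differentiable_deriv t).hasDerivAt).sub
      ((hg.differentiable t).hasDerivAt.mul (hf.differentiable_deriv t).hasDerivAt)).congr_deriv ?_
    rw [hf.deriv_deriv, hg.deriv_deriv]; ring
  simp only [fundamentalMatrix, det_fin_two_of]
  exact is_const_of_deriv_eq_zero (fun t => (hW t).differentiableAt) (fun t => (hW t).deriv) x y

theorem hasDerivAt_prod (hf : IsSchrodingerSolution q f) (t : ℝ) :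
    HasDerivAt (fun t => (f t, deriv f t)) (deriv f t, q t * f t) t := by
  rw [← hf.deriv_deriv]
  exact (hf.differentiable t).hasDerivAt.prodMk (hf.differentiable_deriv t).hasDerivAt

theorem eq_of_apply_eq_of_deriv_eq (hq : Continuous q) (hf : IsSchrodingerSolution q f)
    (hg : IsSchrodingerSolution q g) {t₀ : ℝ} (h₀ : f t₀ = g t₀) (h₀' : deriv f t₀ = deriv g t₀) :
    f = g := by
  funext x
  set r := |x - t₀| + 1
  obtain ⟨C, hC⟩ := (isCompact_Icc (a := t₀ - r) (b := t₀ + r)).exists_bound_of_continuousOn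
    hq.continuousOn
  have hlip : ∀ t ∈ Ioo (t₀ - r) (t₀ + r),
      LipschitzOnWith (max 1 C.toNNReal) (fun p : ℝ × ℝ => (p.2, q t * p.1)) univ := by
    intro t ht
    refine ((lipschitzWith_snd_const_mul_fst (q t)).weaken (max_le_max le_rfl ?_)).lipschitzOnWith
    rw [← NNReal.coe_le_coe, Real.coe_toNNReal', coe_nnnorm]
    exact le_max_of_le_left (hC t (Ioo_subset_Icc_self ht))
  have hsol : ∀ h, IsSchrodingerSolution q h → ∀ t ∈ Ioo (t₀ - r) (t₀ + r),
      HasDerivAt (fun t => (h t, deriv h t)) (deriv h t, q t * h t) t ∧ (h t, deriv h t) ∈ univ :=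
    fun h hh t _ => ⟨hh.hasDerivAt_prod t, mem_univ _⟩
  have hr : 0 < r := by positivity
  have hx : x ∈ Ioo (t₀ - r) (t₀ + r) := by
    constructor <;> cases abs_cases (x - t₀) <;> linarith
  exact congrArg Prod.fst <| ODE_solution_unique_of_mem_Ioo hlip ⟨by linarith, by linarith⟩
    (hsol f hf) (hsol g hg) (Prod.ext h₀ h₀') hx

theorem apply_add_eq_mul_of_periodic {T μ t₀ : ℝ} (hq : Continuous q) (hper : Periodic q T)
    (hf : IsSchrodingerSolution q f) (hT : cauchyData f (t₀ + T) = μ • cauchyData f t₀) (x : ℝ) :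
    f (x + T) = μ * f x := by
  have hT₀ := congrFun hT 0
  have hT₁ := congrFun hT 1
  simp only [cauchyData, Pi.smul_apply, smul_eq_mul, cons_val_zero, cons_val_one] at hT₀ hT₁
  have h := (hf.comp_add_const hper).eq_of_apply_eq_of_deriv_eq hq (hf.const_smul μ) hT₀
    (by rw [deriv_comp_add_const_eq, deriv_const_smul_eq_smul]; exact hT₁)
  exact congrFun h x

end IsSchrodingerSolution

theorem unbounded_solution_from_large_trace_general
    (T E : ℝ) (v : ℝ → ℝ) (hv : Continuous v)
    (hvper : ∀ x, v (x + T) = v x)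
    (f₁ f₂ : ℝ → ℝ)
    (hd₁ : Differentiable ℝ f₁) (hd₁' : Differentiable ℝ (deriv f₁))
    (hd₂ : Differentiable ℝ f₂) (hd₂' : Differentiable ℝ (deriv f₂))
    (he₁ : ∀ x, -(deriv (deriv f₁) x) + (v x - E) * f₁ x = 0)
    (he₂ : ∀ x, -(deriv (deriv f₂) x) + (v x - E) * f₂ x = 0)
    (h₁0 : f₁ 0 = 1) (h₁0' : deriv f₁ 0 = 0)
    (h₂0 : f₂ 0 = 0) (h₂0' : deriv f₂ 0 = 1)
    (htr : |f₁ T + deriv f₂ T| > 2) :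
    ∃ f : ℝ → ℝ, Differentiable ℝ f ∧ Differentiable ℝ (deriv f) ∧
      (∀ x, -(deriv (deriv f) x) + (v x - E) * f x = 0) ∧
      ¬(∃ C, ∀ x, |f x| ≤ C) := by
  set q := fun x => v x - E
  have hper : Periodic q T := fun x => by simp only [q, hvper]
  have s₁ : IsSchrodingerSolution q f₁ := ⟨hd₁, hd₁', fun x => by linarith [he₁ x]⟩
  have s₂ : IsSchrodingerSolution q f₂ := ⟨hd₂, hd₂', fun x => by linarith [he₂ x]⟩
  have hM₀ : fundamentalMatrix f₁ f₂ 0 = 1 := by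
    rw [fundamentalMatrix, h₁0, h₁0', h₂0, h₂0', one_fin_two]
  have hdet : (fundamentalMatrix f₁ f₂ T).det = 1 := by
    rw [s₁.det_fundamentalMatrix_eq s₂ T 0, hM₀, det_one]
  obtain ⟨μ, hμ, u, hu, hMu⟩ := exists_mulVec_eq_smul_of_det_eq_one_of_two_lt_abs_trace hdet
    (by rwa [fundamentalMatrix, trace_fin_two_of])
  set f := u 0 • f₁ + u 1 • f₂
  have hf : IsSchrodingerSolution q f := (s₁.const_smul _).add (s₂.const_smul _)
  have hf₀ : cauchyData f 0 = u := by rw [← fundamentalMatrix_mulVec hd₁ hd₂, hM₀, one_mulVec]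
  have hfT : cauchyData f (0 + T) = μ • cauchyData f 0 := by
    rw [zero_add, ← fundamentalMatrix_mulVec hd₁ hd₂, hMu, hf₀]
  have hf_ne : f ≠ 0 := fun hf_zero => hu (by rw [← hf₀, hf_zero]; simp [cauchyData])
  refine ⟨f, hf.differentiable, hf.differentiable_deriv, fun x => by rw [hf.deriv_deriv]; ring, ?_⟩
  exact not_exists_abs_le_of_apply_add_eq_mul
    (hf.apply_add_eq_mul_of_periodic (hv.sub continuous_const) hper hfT) hμ hf_ne

theorem unbounded_solution_from_large_trace
    (T E : ℝ) (hT : 0 < T) (v : ℝ → ℝ) (hv : Continuous v)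
    (hvper : ∀ x, v (x + T) = v x)
    (f₁ f₂ : ℝ → ℝ)
    (hd₁ : Differentiable ℝ f₁) (hd₁' : Differentiable ℝ (deriv f₁))
    (hd₂ : Differentiable ℝ f₂) (hd₂' : Differentiable ℝ (deriv f₂))
    (he₁ : ∀ x, -(deriv (deriv f₁) x) + (v x - E) * f₁ x = 0)
    (he₂ : ∀ x, -(deriv (deriv f₂) x) + (v x - E) * f₂ x = 0)
    (h₁0 : f₁ 0 = 1) (h₁0' : deriv f₁ 0 = 0)
    (h₂0 : f₂ 0 = 0) (h₂0' : deriv f₂ 0 = 1)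
    (htr : |f₁ T + deriv f₂ T| > 2) :
    ∃ f : ℝ → ℝ, Differentiable ℝ f ∧ Differentiable ℝ (deriv f) ∧
      (∀ x, -(deriv (deriv f) x) + (v x - E) * f x = 0) ∧
      ¬(∃ C, ∀ x, |f x| ≤ C) :=
  unbounded_solution_from_large_trace_general T E v hv hvper f₁ f₂ hd₁ hd₁' hd₂ hd₂' he₁ he₂ h₁0
    h₁0' h₂0 h₂0' htr
end

section
/- Let v : ℝ → ℝ be continuous with v(x + T) = v(x) for all x, where T > 0, and let E ∈ ℝ. Let f₁, f₂ : ℝ → ℝ be twice differentiable solutions of −f'' + (v − E) f = 0 with f₁(0) = 1, f₁'(0) = 0, f₂(0) = 0, f₂'(0) = 1. If |f₁(T) + f₂'(T)| < 2, then every twice differentiable solution f : ℝ → ℝ of −f'' + (v − E) f = 0 is bounded on ℝ. -/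
/-!
Every solution is `f 0 • f₁ + f' 0 • f₂` (uniqueness for the first-order system in `(f, f')`),
and `f (· + T)` is again a solution. Hence translation by `T` acts on the solution space through
the monodromy matrix `M`, which has determinant `1` (the Wronskian) and trace `t = f₁ T + f₂' T`,
so Cayley–Hamilton gives `f (x + 2T) = t f (x + T) - f x`. Along each orbit `x₀ + kT` the
quadratic form `a² + b² - t a b` of consecutive values is then conserved, and for `|t| < 2` it is
positive definite, so the values stay bounded by those on `[0, 2T]`.
-/

open Set Function NNReal

structure SolvesSchrodinger (q f : ℝ → ℝ) : Prop where
  differentiable : Differentiable ℝ f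
  differentiable_deriv : Differentiable ℝ (deriv f)
  deriv_deriv : ∀ x, deriv (deriv f) x = q x * f x

def schrodingerField (q : ℝ → ℝ) (t : ℝ) (y : ℝ × ℝ) : ℝ × ℝ := (y.2, q t * y.1)

lemma lipschitzWith_schrodingerField {q : ℝ → ℝ} {t : ℝ} {K : ℝ≥0} (hK₁ : 1 ≤ K)
    (hKq : |q t| ≤ K) : LipschitzWith K (schrodingerField q t) := by
  refine LipschitzWith.of_dist_le_mul fun y z => ?_
  simp only [schrodingerField, Prod.dist_eq, Real.dist_eq, ← mul_sub, abs_mul]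
  have hK₁' : (1 : ℝ) ≤ K := hK₁
  refine max_le ?_ ?_
  · calc |y.2 - z.2| ≤ 1 * max |y.1 - z.1| |y.2 - z.2| := by
          rw [one_mul]; exact le_max_right _ _
      _ ≤ K * max |y.1 - z.1| |y.2 - z.2| := by gcongr
  · calc |q t| * |y.1 - z.1| ≤ K * max |y.1 - z.1| |y.2 - z.2| := by gcongr; exact le_max_left _ _

namespace SolvesSchrodinger

variable {q f g : ℝ → ℝ}

lemma hasDerivAt_prod (hf : SolvesSchrodinger q f) (t : ℝ) :
    HasDerivAt (fun t => (f t, deriv f t)) (schrodingerField q t (f t, deriv f t)) t := by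
  have h := (hf.differentiable_deriv t).hasDerivAt
  rw [hf.deriv_deriv] at h
  exact (hf.differentiable t).hasDerivAt.prodMk h

theorem eq_of_eq_of_deriv_eq (hq : Continuous q) (hf : SolvesSchrodinger q f)
    (hg : SolvesSchrodinger q g) {t₀ : ℝ} (h₀ : f t₀ = g t₀) (h₀' : deriv f t₀ = deriv g t₀) :
    f = g := by
  funext x
  -- `q` is only locally bounded, so the Lipschitz constant is taken on a window around `t₀` and `x`
  set R := |x - t₀| + 1
  obtain ⟨C, hC⟩ := (isCompact_Icc (a := t₀ - R) (b := t₀ + R)).exists_bound_of_continuousOn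
    hq.continuousOn
  have hR₀ : 0 < R := by positivity
  have hR : x ∈ Ioo (t₀ - R) (t₀ + R) := by
    constructor <;> linarith [neg_abs_le (x - t₀), le_abs_self (x - t₀)]
  have hlip : ∀ t ∈ Ioo (t₀ - R) (t₀ + R),
      LipschitzOnWith (max 1 C.toNNReal) (schrodingerField q t) univ := fun t ht =>
    (lipschitzWith_schrodingerField (le_max_left _ _) ((hC t (Ioo_subset_Icc_self ht)).trans
      ((Real.le_coe_toNNReal C).trans (le_max_right _ _)))).lipschitzOnWith
  have := ODE_solution_unique_of_mem_Ioo hlip (t₀ := t₀) ⟨by linarith, by linarith⟩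
    (fun t _ => ⟨hf.hasDerivAt_prod t, mem_univ _⟩)
    (fun t _ => ⟨hg.hasDerivAt_prod t, mem_univ _⟩)
    (Prod.ext h₀ h₀') hR
  exact congrArg Prod.fst this

lemma deriv_const_mul_add_const_mul {f g : ℝ → ℝ} (hf : Differentiable ℝ f)
    (hg : Differentiable ℝ g) (a b : ℝ) :
    deriv (fun x => a * f x + b * g x) = fun x => a * deriv f x + b * deriv g x := by
  funext x
  rw [deriv_fun_add ((hf x).const_mul a) ((hg x).const_mul b), deriv_const_mul a (hf x),
    deriv_const_mul b (hg x)]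

lemma const_mul_add_const_mul (hf : SolvesSchrodinger q f) (hg : SolvesSchrodinger q g)
    (a b : ℝ) : SolvesSchrodinger q (fun x => a * f x + b * g x) where
  differentiable := (hf.differentiable.const_mul a).add (hg.differentiable.const_mul b)
  differentiable_deriv := by
    rw [deriv_const_mul_add_const_mul hf.differentiable hg.differentiable]
    exact (hf.differentiable_deriv.const_mul a).add (hg.differentiable_deriv.const_mul b)
  deriv_deriv x := by
    simp only [deriv_const_mul_add_const_mul hf.differentiable hg.differentiable,
      deriv_const_mul_add_const_mul hf.differentiable_deriv hg.differentiable_deriv,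
      hf.deriv_deriv, hg.deriv_deriv]
    ring

lemma comp_add_const (hf : SolvesSchrodinger q f) (T : ℝ) :
    SolvesSchrodinger (fun x => q (x + T)) (fun x => f (x + T)) := by
  have hd : deriv (fun x => f (x + T)) = fun x => deriv f (x + T) :=
    funext (deriv_comp_add_const f T)
  refine ⟨hf.differentiable.comp (differentiable_id.add_const T), ?_, fun x => ?_⟩
  · rw [hd]
    exact hf.differentiable_deriv.comp (differentiable_id.add_const T)
  · rw [hd, deriv_comp_add_const]
    exact hf.deriv_deriv (x + T)

lemma wronskian_eq (hf : SolvesSchrodinger q f) (hg : SolvesSchrodinger q g) (x y : ℝ) :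
    f x * deriv g x - g x * deriv f x = f y * deriv g y - g y * deriv f y := by
  refine is_const_of_deriv_eq_zero (f := fun x => f x * deriv g x - g x * deriv f x)
    ((hf.differentiable.mul hg.differentiable_deriv).sub
      (hg.differentiable.mul hf.differentiable_deriv)) (fun t => ?_) x y
  rw [deriv_fun_sub (f := fun x => f x * deriv g x) (g := fun x => g x * deriv f x)
      ((hf.differentiable t).mul (hg.differentiable_deriv t))
      ((hg.differentiable t).mul (hf.differentiable_deriv t)),
    deriv_fun_mul (hf.differentiable t) (hg.differentiable_deriv t),
    deriv_fun_mul (hg.differentiable t) (hf.differentiable_deriv t),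
    hf.deriv_deriv, hg.deriv_deriv]
  ring

end SolvesSchrodinger

structure IsNormalizedFundamentalSystem (q f₁ f₂ : ℝ → ℝ) : Prop where
  solves_fst : SolvesSchrodinger q f₁
  solves_snd : SolvesSchrodinger q f₂
  fst_zero : f₁ 0 = 1
  deriv_fst_zero : deriv f₁ 0 = 0
  snd_zero : f₂ 0 = 0
  deriv_snd_zero : deriv f₂ 0 = 1

namespace IsNormalizedFundamentalSystem

variable {q f f₁ f₂ : ℝ → ℝ}

theorem eq_combination (hq : Continuous q) (hF : IsNormalizedFundamentalSystem q f₁ f₂)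
    (hf : SolvesSchrodinger q f) : f = fun x => f 0 * f₁ x + deriv f 0 * f₂ x :=
  hf.eq_of_eq_of_deriv_eq hq (hF.solves_fst.const_mul_add_const_mul hF.solves_snd _ _) (t₀ := 0)
    (by simp [hF.fst_zero, hF.snd_zero])
    (by simp [SolvesSchrodinger.deriv_const_mul_add_const_mul hF.solves_fst.differentiable
      hF.solves_snd.differentiable, hF.deriv_fst_zero, hF.deriv_snd_zero])

theorem deriv_eq_combination (hq : Continuous q) (hF : IsNormalizedFundamentalSystem q f₁ f₂)
    (hf : SolvesSchrodinger q f) (x : ℝ) :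
    deriv f x = f 0 * deriv f₁ x + deriv f 0 * deriv f₂ x := by
  conv_lhs => rw [hF.eq_combination hq hf, SolvesSchrodinger.deriv_const_mul_add_const_mul
    hF.solves_fst.differentiable hF.solves_snd.differentiable]

theorem add_period_eq (hq : Continuous q) (hF : IsNormalizedFundamentalSystem q f₁ f₂) {T : ℝ}
    (hper : Periodic q T) (hf : SolvesSchrodinger q f) (x : ℝ) :
    f (x + T) = f T * f₁ x + deriv f T * f₂ x := by
  have hshift : SolvesSchrodinger q (fun x => f (x + T)) := by
    simpa only [hper.funext] using hf.comp_add_const T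
  simpa only [deriv_comp_add_const, zero_add] using congrFun (hF.eq_combination hq hshift) x

/-- Cayley–Hamilton for the monodromy matrix, whose determinant is the Wronskian `1`. -/
theorem add_two_periods_eq (hq : Continuous q) (hF : IsNormalizedFundamentalSystem q f₁ f₂)
    {T : ℝ} (hper : Periodic q T) (hf : SolvesSchrodinger q f) (x : ℝ) :
    f (x + T + T) = (f₁ T + deriv f₂ T) * f (x + T) - f x := by
  have hW := hF.solves_fst.wronskian_eq hF.solves_snd T 0
  rw [hF.fst_zero, hF.deriv_fst_zero, hF.snd_zero, hF.deriv_snd_zero] at hW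
  rw [hF.add_period_eq hq hper hf, hF.add_period_eq hq hper hF.solves_fst,
    hF.add_period_eq hq hper hF.solves_snd, hF.add_period_eq hq hper hf,
    congrFun (hF.eq_combination hq hf) T, hF.deriv_eq_combination hq hf T,
    congrFun (hF.eq_combination hq hf) x]
  linear_combination (-(f 0 * f₁ x + deriv f 0 * f₂ x)) * hW

end IsNormalizedFundamentalSystem

lemma sq_add_sq_sub_mul_eq_of_recurrence {t : ℝ} {u : ℤ → ℝ}
    (hu : ∀ k, u (k + 2) = t * u (k + 1) - u k) (k : ℤ) :
    u k ^ 2 + u (k + 1) ^ 2 - t * u k * u (k + 1) = u 0 ^ 2 + u 1 ^ 2 - t * u 0 * u 1 := by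
  have hstep : ∀ k, u (k + 1) ^ 2 + u (k + 1 + 1) ^ 2 - t * u (k + 1) * u (k + 1 + 1) =
      u k ^ 2 + u (k + 1) ^ 2 - t * u k * u (k + 1) := fun k => by
    rw [add_assoc, one_add_one_eq_two, hu]
    ring
  induction k using Int.induction_on with
  | zero => simp
  | succ i ih => rw [hstep, ih]
  | pred i ih => rw [← ih, ← hstep (-i - 1), sub_add_cancel]

lemma abs_le_of_recurrence {t C : ℝ} (ht : |t| < 2) {u : ℤ → ℝ}
    (hu : ∀ k, u (k + 2) = t * u (k + 1) - u k) (h₀ : |u 0| ≤ C) (h₁ : |u 1| ≤ C) (k : ℤ) :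
    |u k| ≤ √(16 * C ^ 2 / (4 - t ^ 2)) := by
  have hinv := sq_add_sq_sub_mul_eq_of_recurrence hu k
  have ht2 : t ^ 2 < 4 := by nlinarith [sq_abs t, abs_nonneg t]
  have hcross : -(t * u 0 * u 1) ≤ 2 * C ^ 2 := by
    calc -(t * u 0 * u 1) ≤ |t| * |u 0| * |u 1| := by
          rw [← abs_mul, ← abs_mul]; exact neg_le_abs _
      _ ≤ 2 * C * C := by
        have hC : 0 ≤ C := (abs_nonneg _).trans h₀
        gcongr
      _ = 2 * C ^ 2 := by ring
  apply Real.abs_le_sqrt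
  rw [le_div_iff₀ (by linarith)]
  nlinarith [sq_nonneg (2 * u (k + 1) - t * u k), sq_le_sq' (abs_le.1 h₀).1 (abs_le.1 h₀).2,
    sq_le_sq' (abs_le.1 h₁).1 (abs_le.1 h₁).2]

theorem exists_abs_le_of_add_two_periods {f : ℝ → ℝ} {T t : ℝ} (hT : 0 < T) (ht : |t| < 2)
    (hf : Continuous f) (hrec : ∀ x, f (x + T + T) = t * f (x + T) - f x) :
    ∃ C, ∀ x, |f x| ≤ C := by
  obtain ⟨C, hC⟩ := (isCompact_Icc (a := 0) (b := T + T)).exists_bound_of_continuousOn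
    hf.continuousOn
  refine ⟨√(16 * C ^ 2 / (4 - t ^ 2)), fun x => ?_⟩
  set x₀ := toIcoMod hT 0 x
  have hx₀ : x₀ ∈ Ico 0 T := by simpa using toIcoMod_mem_Ico hT 0 x
  have hu : ∀ k : ℤ, f (x₀ + ↑(k + 2) * T) = t * f (x₀ + ↑(k + 1) * T) - f (x₀ + k * T) :=
    fun k => by
      have hk₂ : x₀ + ↑(k + 2) * T = x₀ + k * T + T + T := by push_cast; ring
      have hk₁ : x₀ + ↑(k + 1) * T = x₀ + k * T + T := by push_cast; ring
      rw [hk₂, hk₁, hrec]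
  have hx : f x = f (x₀ + ↑(toIcoDiv hT 0 x) * T) := by
    rw [← zsmul_eq_mul, toIcoMod_add_toIcoDiv_zsmul]
  rw [hx]
  refine abs_le_of_recurrence ht (u := fun k : ℤ => f (x₀ + k * T)) hu ?_ ?_ _
  · simpa using hC x₀ ⟨hx₀.1, by linarith [hx₀.2]⟩
  · simpa using hC (x₀ + T) ⟨by linarith [hx₀.1], by linarith [hx₀.2]⟩

theorem all_solutions_bounded_from_small_trace
    (T E : ℝ) (hT : 0 < T) (v : ℝ → ℝ) (hv : Continuous v)
    (hvper : ∀ x, v (x + T) = v x)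
    (f₁ f₂ : ℝ → ℝ)
    (hd₁ : Differentiable ℝ f₁) (hd₁' : Differentiable ℝ (deriv f₁))
    (hd₂ : Differentiable ℝ f₂) (hd₂' : Differentiable ℝ (deriv f₂))
    (he₁ : ∀ x, -(deriv (deriv f₁) x) + (v x - E) * f₁ x = 0)
    (he₂ : ∀ x, -(deriv (deriv f₂) x) + (v x - E) * f₂ x = 0)
    (h₁0 : f₁ 0 = 1) (h₁0' : deriv f₁ 0 = 0)
    (h₂0 : f₂ 0 = 0) (h₂0' : deriv f₂ 0 = 1)
    (htr : |f₁ T + deriv f₂ T| < 2) :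
    ∀ f : ℝ → ℝ, Differentiable ℝ f → Differentiable ℝ (deriv f) →
      (∀ x, -(deriv (deriv f) x) + (v x - E) * f x = 0) →
      ∃ C, ∀ x, |f x| ≤ C := by
  intro f hd hd' he
  have solves {g : ℝ → ℝ} (hg : Differentiable ℝ g) (hg' : Differentiable ℝ (deriv g))
      (heg : ∀ x, -(deriv (deriv g) x) + (v x - E) * g x = 0) :
      SolvesSchrodinger (fun x => v x - E) g :=
    ⟨hg, hg', fun x => by linarith [heg x]⟩
  have hF : IsNormalizedFundamentalSystem (fun x => v x - E) f₁ f₂ :=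
    ⟨solves hd₁ hd₁' he₁, solves hd₂ hd₂' he₂, h₁0, h₁0', h₂0, h₂0'⟩
  have hper : Periodic (fun x => v x - E) T := fun x => by simp only [hvper]
  exact exists_abs_le_of_add_two_periods hT htr hd.continuous
    (hF.add_two_periods_eq (hv.sub continuous_const) hper (solves hd hd' he))
end
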